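/- For a monotonically increasing performance goal, the heuristic h(v) = Σ_{q ∈ v_u} min_i (f^i_r · l(q, i)) never overestimates the true remaining cost: for any path from vertex v to a goal vertex g in the scheduling graph, the sum of edge weights along the path is at least h(v). -/

import Mathlib

/-! Every edge of the path has nonnegative weight, and each query `q ∈ v_u` is placed by some
edge of weight at least `min_i f^i_r · l(q, i)`; discarding all other edges leaves `h(v)`. -/

/-- Edges of a scheduling graph: start-up of a VM of some type, or placement
of a query on a VM of some type. -/
inductive SEdge (Query VMType : Type) where
  | startup (i : VMType)
  | place (q : Query) (i : VMType)
  deriving DecidableEq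

namespace SEdge

variable {Query VMType : Type}

theorem sum_le_sum_map_of_forall_place_mem [DecidableEq Query]
    (w : SEdge Query VMType → ℝ) (m : Query → ℝ)
    (hw : ∀ e, 0 ≤ w e) (hm : ∀ q i, m q ≤ w (place q i)) :
    ∀ (edges : List (SEdge Query VMType)) (vu : Finset Query),
      (∀ q ∈ vu, ∃ i, place q i ∈ edges) → ∑ q ∈ vu, m q ≤ (edges.map w).sum
  | [], vu, hvu => by
    obtain rfl : vu = ∅ := Finset.eq_empty_of_forall_notMem fun q hq => by
      simpa using hvu q hq
    simp
  | startup i :: es, vu, hvu => by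
    have ih := sum_le_sum_map_of_forall_place_mem w m hw hm es vu fun q hq => by
      simpa using hvu q hq
    simpa using add_le_add (hw (startup i)) ih
  | place q₀ i :: es, vu, hvu => by
    have ih := sum_le_sum_map_of_forall_place_mem w m hw hm es (vu.erase q₀) fun q hq => by
      obtain ⟨hne, hq⟩ := Finset.mem_erase.mp hq
      simpa [hne] using hvu q hq
    have hsplit : ∑ q ∈ vu, m q ≤ w (place q₀ i) + ∑ q ∈ vu.erase q₀, m q := by
      by_cases hq₀ : q₀ ∈ vu
      · rw [← Finset.add_sum_erase vu m hq₀]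
        exact add_le_add_left (hm q₀ i) _
      · rw [Finset.erase_eq_of_notMem hq₀]
        exact le_add_of_nonneg_left (hw _)
    simpa using hsplit.trans (add_le_add_right ih _)

end SEdge

theorem stmt0 {Query VMType : Type} [DecidableEq Query]
    [Fintype VMType] [Nonempty VMType]
    (f_s f_r : VMType → ℝ) (l : Query → VMType → ℝ)
    (hfs : ∀ i, 0 ≤ f_s i) (hfr : ∀ i, 0 ≤ f_r i) (hl : ∀ q i, 0 ≤ l q i)
    (vu : Finset Query)
    (edges : List (SEdge Query VMType))
    (penaltyDiff : SEdge Query VMType → ℝ)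
    -- monotonically increasing performance goal: penalties never decrease
    (hmono : ∀ e, 0 ≤ penaltyDiff e)
    -- the path contains exactly one placement edge for each query in `v_u`
    (hplace : ∀ q ∈ vu, (edges.filter (fun e => match e with
        | SEdge.place q' _ => q' == q
        | _ => false)).length = 1) :
    ∑ q ∈ vu, (Finset.univ.inf' Finset.univ_nonempty (fun i => f_r i * l q i))
      ≤ (edges.map (fun e => (match e with
          | SEdge.startup i => f_s i
          | SEdge.place q i => l q i * f_r i) + penaltyDiff e)).sum := by
  refine SEdge.sum_le_sum_map_of_forall_place_mem _ _ ?_ ?_ edges vu ?_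
  · rintro (i | ⟨q, i⟩)
    · exact add_nonneg (hfs i) (hmono _)
    · exact add_nonneg (mul_nonneg (hl q i) (hfr i)) (hmono _)
  · intro q i
    calc Finset.univ.inf' Finset.univ_nonempty (fun i => f_r i * l q i)
        ≤ f_r i * l q i := Finset.inf'_le _ (Finset.mem_univ i)
      _ = l q i * f_r i := mul_comm _ _
      _ ≤ l q i * f_r i + penaltyDiff (SEdge.place q i) := le_add_of_nonneg_right (hmono _)
  · intro q hq
    obtain ⟨e, hfilter⟩ := List.length_pos_iff_exists_mem.mp (hplace q hq).ge
    obtain ⟨he, hplaced⟩ := List.mem_filter.mp hfilter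
    rcases e with i | ⟨q', i⟩
    · simp at hplaced
    · obtain rfl : q' = q := by simpa using hplaced
      exact ⟨i, he⟩
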